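/- The expected extremal distortion ∫₁^{√3} K · (3/(πK²))(K²+1) log((K²+1)/(2(K²−1))) dK equals (3/π)( (1/4)Li₂(1/9) − Li₂(1/3) + π²/8 + log 2 · (1 − log √3) ). -/

import Mathlib

/-!
On `(1, √3]` the integrand is `(3/π) (K + K⁻¹) log ((K² + 1) / (2 (K² - 1)))`. It has a
primitive built from `x log x`, `log` and the dilogarithm: `d/dK Li₂(K⁻ⁿ) = n log (1 - K⁻ⁿ) / K`,
and since `1 - K⁻⁴ = (1 - K⁻²)(1 + K⁻²)`, the terms `log (K² ± 1) / K` are produced by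
`¼ Li₂(K⁻⁴) - Li₂(K⁻²)`.
The integrand is nonnegative exactly up to `K = √3`, which makes it integrable despite the
logarithmic singularity at `1`, so the fundamental theorem of calculus applies; `Li₂(1) = π²/6`
evaluates the primitive at `1`.
-/

/-- The dilogarithm `Li₂(x) = ∑_{n ≥ 1} xⁿ / n²`. -/
noncomputable def Li2 (x : ℝ) : ℝ := ∑' n : ℕ, x ^ (n + 1) / ((n : ℝ) + 1) ^ 2

open Real Set

lemma norm_li2_term_le {x : ℝ} (hx : |x| ≤ 1) (n : ℕ) :
    ‖x ^ (n + 1) / ((n : ℝ) + 1) ^ 2‖ ≤ 1 / ((n : ℝ) + 1) ^ 2 := by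
  rw [norm_div, norm_pow, norm_of_nonneg (by positivity : (0 : ℝ) ≤ ((n : ℝ) + 1) ^ 2)]
  gcongr
  exact pow_le_one₀ (norm_nonneg x) hx

lemma summable_one_div_nat_add_one_sq : Summable fun n : ℕ => 1 / ((n : ℝ) + 1) ^ 2 := by
  simpa using (summable_nat_add_iff 1).2 (Real.summable_one_div_nat_pow.2 one_lt_two)

lemma li2_one : Li2 1 = π ^ 2 / 6 := by
  simpa [Li2] using ((hasSum_nat_add_iff' 1).2 hasSum_zeta_two).tsum_eq

lemma continuousOn_li2 : ContinuousOn Li2 (Icc (-1) 1) :=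
  continuousOn_tsum (fun n => ((continuous_pow (n + 1)).div_const _).continuousOn)
    summable_one_div_nat_add_one_sq fun n _ hx => norm_li2_term_le (abs_le.2 hx) n

lemma hasDerivAt_li2 {x : ℝ} (hx : |x| < 1) (hx0 : x ≠ 0) :
    HasDerivAt Li2 (-log (1 - x) / x) x := by
  obtain ⟨r, hxr, hr1⟩ := exists_between hx
  have hr0 : 0 < r := (abs_nonneg x).trans_lt hxr
  have hseries : HasSum (fun n : ℕ => x ^ n / ((n : ℝ) + 1)) (-log (1 - x) / x) := by
    refine ((hasSum_pow_div_log_of_abs_lt_one hx).div_const x).congr_fun fun n => ?_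
    field_simp
    ring
  rw [← hseries.tsum_eq]
  refine hasDerivAt_tsum_of_isPreconnected (u := fun n : ℕ => r ^ n) (t := Ioo (-r) r) (y₀ := 0)
    (g' := fun n y => y ^ n / ((n : ℝ) + 1))
    (summable_geometric_of_lt_one hr0.le hr1) isOpen_Ioo isPreconnected_Ioo
    (fun n y _ => ?_) (fun n y hy => ?_) ⟨neg_lt_zero.2 hr0, hr0⟩
    (by simp) (abs_lt.1 hxr)
  · refine ((hasDerivAt_pow (n + 1) y).div_const (((n : ℝ) + 1) ^ 2)).congr_deriv ?_
    rw [add_tsub_cancel_right]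
    push_cast
    field_simp
  · rw [norm_div, norm_pow, norm_of_nonneg (by positivity : (0 : ℝ) ≤ n + 1)]
    calc ‖y‖ ^ n / (n + 1) ≤ ‖y‖ ^ n :=
          div_le_self (by positivity) (by linarith [n.cast_nonneg (α := ℝ)])
      _ ≤ r ^ n := pow_le_pow_left₀ (norm_nonneg y) (abs_lt.2 hy).le n

lemma hasDerivAt_li2_inv_pow {K : ℝ} (hK : 1 < |K|) {n : ℕ} (hn : n ≠ 0) :
    HasDerivAt (fun K => Li2 (K ^ n)⁻¹) (n * log (1 - (K ^ n)⁻¹) / K) K := by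
  have hK0 : K ≠ 0 := abs_pos.1 (one_pos.trans hK)
  have hy : |(K ^ n)⁻¹| < 1 := by
    rw [abs_inv, abs_pow]
    exact inv_lt_one_of_one_lt₀ (one_lt_pow₀ hK hn)
  obtain ⟨m, rfl⟩ := Nat.exists_eq_add_one_of_ne_zero hn
  refine ((hasDerivAt_li2 hy (by positivity)).comp K
    ((hasDerivAt_pow (m + 1) K).inv (pow_ne_zero _ hK0))).congr_deriv ?_
  simp only [add_tsub_cancel_right]
  field_simp
  ring

lemma continuousOn_li2_inv_pow (n : ℕ) :
    ContinuousOn (fun K : ℝ => Li2 (K ^ n)⁻¹) (Ici 1) := by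
  refine continuousOn_li2.comp ((continuous_pow n).continuousOn.inv₀ fun K hK => ?_)
    fun K hK => ?_
  · exact (one_pos.trans_le (one_le_pow₀ hK)).ne'
  · have h1 : (1 : ℝ) ≤ K ^ n := one_le_pow₀ hK
    exact ⟨by linarith [inv_nonneg.2 (zero_le_one.trans h1)], inv_le_one_of_one_le₀ h1⟩

noncomputable def distortionDensity (K : ℝ) : ℝ :=
  (K + K⁻¹) * log ((K ^ 2 + 1) / (2 * (K ^ 2 - 1)))

noncomputable def distortionPrimitive (K : ℝ) : ℝ :=
  ((K ^ 2 + 1) * log (K ^ 2 + 1) - (K ^ 2 - 1) * log (K ^ 2 - 1)) / 2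
    - log 2 * (K ^ 2 / 2 + log K) + Li2 (K ^ 4)⁻¹ / 4 - Li2 (K ^ 2)⁻¹

lemma hasDerivAt_distortionPrimitive {K : ℝ} (hK : 1 < |K|) :
    HasDerivAt distortionPrimitive (distortionDensity K) K := by
  have hK0 : K ≠ 0 := abs_pos.1 (one_pos.trans hK)
  have hK2 : 1 < K ^ 2 := by rw [← sq_abs]; exact one_lt_pow₀ hK two_ne_zero
  have hplus : 0 < K ^ 2 + 1 := by positivity
  have hminus : 0 < K ^ 2 - 1 := by linarith
  have hsq : HasDerivAt (fun K : ℝ => K ^ 2) (2 * K) K := by simpa using hasDerivAt_pow 2 K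
  have hA : HasDerivAt (fun K : ℝ => (K ^ 2 + 1) * log (K ^ 2 + 1))
      ((log (K ^ 2 + 1) + 1) * (2 * K)) K :=
    HasDerivAt.comp K (hasDerivAt_mul_log hplus.ne') (hsq.add_const 1)
  have hB : HasDerivAt (fun K : ℝ => (K ^ 2 - 1) * log (K ^ 2 - 1))
      ((log (K ^ 2 - 1) + 1) * (2 * K)) K :=
    HasDerivAt.comp K (hasDerivAt_mul_log hminus.ne') (hsq.sub_const 1)
  have hC : HasDerivAt (fun K : ℝ => K ^ 2 / 2 + log K) (2 * K / 2 + K⁻¹) K :=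
    (hsq.div_const 2).add (hasDerivAt_log hK0)
  have hD := hasDerivAt_li2_inv_pow hK (n := 4) (by norm_num)
  have hE := hasDerivAt_li2_inv_pow hK (n := 2) (by norm_num)
  refine ((((hA.sub hB).div_const 2).sub (hC.const_mul (log 2))).add (hD.div_const 4)
    |>.sub hE).congr_deriv ?_
  have hlog2 : log (1 - (K ^ 2)⁻¹) = log (K ^ 2 - 1) - 2 * log K := by
    rw [show 1 - (K ^ 2)⁻¹ = (K ^ 2 - 1) / K ^ 2 by field_simp,
      log_div hminus.ne' (by positivity), log_pow]
    push_cast; ring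
  have hlog4 : log (1 - (K ^ 4)⁻¹) = log (K ^ 2 - 1) + log (K ^ 2 + 1) - 4 * log K := by
    rw [show 1 - (K ^ 4)⁻¹ = (K ^ 2 - 1) * (K ^ 2 + 1) / K ^ 4 by field_simp; ring,
      log_div (by positivity) (by positivity), log_mul hminus.ne' hplus.ne', log_pow]
    push_cast; ring
  have hlog : log ((K ^ 2 + 1) / (2 * (K ^ 2 - 1))) =
      log (K ^ 2 + 1) - log 2 - log (K ^ 2 - 1) := by
    rw [log_div hplus.ne' (by positivity), log_mul two_ne_zero hminus.ne']
    ring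
  rw [distortionDensity, hlog, hlog2, hlog4]
  push_cast
  field_simp
  ring

lemma distortionDensity_nonneg {K : ℝ} (hK : 1 < K) (hK3 : K ^ 2 ≤ 3) :
    0 ≤ distortionDensity K := by
  have hminus : 0 < K ^ 2 - 1 := by nlinarith
  refine mul_nonneg (by positivity) (log_nonneg ?_)
  rw [le_div_iff₀ (by positivity)]
  linarith

lemma continuousOn_distortionPrimitive : ContinuousOn distortionPrimitive (Ici 1) := by
  have hA : Continuous fun K : ℝ => (K ^ 2 + 1) * log (K ^ 2 + 1) := by fun_prop
  have hB : Continuous fun K : ℝ => (K ^ 2 - 1) * log (K ^ 2 - 1) := by fun_prop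
  have hC : ContinuousOn (fun K : ℝ => K ^ 2 / 2 + log K) (Ici 1) :=
    (continuous_pow 2).continuousOn.div_const 2 |>.add <|
      continuousOn_log.mono fun K hK => (one_pos.trans_le hK).ne'
  exact (((hA.sub hB).continuousOn.div_const 2).sub (hC.const_smul (log 2))).add
    ((continuousOn_li2_inv_pow 4).div_const 4) |>.sub (continuousOn_li2_inv_pow 2)

lemma integral_distortionDensity {b : ℝ} (hb : 1 ≤ b) (hb3 : b ^ 2 ≤ 3) :
    ∫ K in (1 : ℝ)..b, distortionDensity K = distortionPrimitive b - distortionPrimitive 1 := by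
  have hcont : ContinuousOn distortionPrimitive (Icc 1 b) :=
    continuousOn_distortionPrimitive.mono Icc_subset_Ici_self
  have hderiv : ∀ K ∈ Ioo 1 b, HasDerivAt distortionPrimitive (distortionDensity K) K :=
    fun K hK => hasDerivAt_distortionPrimitive (hK.1.trans_le (le_abs_self K))
  have hint : IntervalIntegrable distortionDensity MeasureTheory.volume 1 b :=
    (intervalIntegrable_iff_integrableOn_Ioc_of_le hb).2 <|
      intervalIntegral.integrableOn_deriv_of_nonneg hcont hderiv fun K hK =>
        distortionDensity_nonneg hK.1 <|
          (pow_le_pow_left₀ (by linarith [hK.1]) hK.2.le 2).trans hb3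
  exact intervalIntegral.integral_eq_sub_of_hasDerivAt_of_le hb hcont hderiv hint

lemma distortionPrimitive_one : distortionPrimitive 1 = log 2 / 2 - π ^ 2 / 8 := by
  norm_num [distortionPrimitive, li2_one]
  ring

lemma distortionPrimitive_sqrt_three :
    distortionPrimitive √3 =
      3 / 2 * log 2 - log 2 * log √3 + Li2 (1 / 9) / 4 - Li2 (1 / 3) := by
  have h2 : √3 ^ 2 = 3 := sq_sqrt (by norm_num)
  have h4 : √3 ^ 4 = 9 := by rw [show 4 = 2 * 2 from rfl, pow_mul, h2]; norm_num
  have hlog4 : log 4 = 2 * log 2 := by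
    rw [show (4 : ℝ) = 2 ^ 2 by norm_num, log_pow]; push_cast; ring
  rw [distortionPrimitive, h2, h4]
  norm_num [hlog4]
  ring

theorem expected_extremal_distortion :
    ∫ K in (1 : ℝ)..Real.sqrt 3,
        K * (3 / (Real.pi * K ^ 2)) * (K ^ 2 + 1) *
          Real.log ((K ^ 2 + 1) / (2 * (K ^ 2 - 1))) =
      (3 / Real.pi) * ((1 / 4) * Li2 (1 / 9) - Li2 (1 / 3) + Real.pi ^ 2 / 8 +
        Real.log 2 * (1 - Real.log (Real.sqrt 3))) := by
  have hscale : ∀ K : ℝ, K * (3 / (π * K ^ 2)) * (K ^ 2 + 1) *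
      log ((K ^ 2 + 1) / (2 * (K ^ 2 - 1))) = 3 / π * distortionDensity K := by
    intro K
    rcases eq_or_ne K 0 with rfl | hK
    · simp [distortionDensity]
    · rw [distortionDensity]
      field_simp
  simp_rw [hscale]
  rw [intervalIntegral.integral_const_mul,
    integral_distortionDensity (one_le_sqrt.2 (by norm_num)) (sq_sqrt (by norm_num)).le,
    distortionPrimitive_sqrt_three, distortionPrimitive_one]
  ring
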